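/- arXiv:2405.20047 — 5 statements merged into one kernel-verified Lean document; each statement's English description precedes it below -/
import Mathlib

section
/- Let q be a prime power, k,r ≥ 2, and let U = {(s, s^q, s^{q^2}, …, s^{q^{r-1}}) : s ∈ F_{q^k}} ⊆ F_{q^k}^r. For a ∈ F_{q^k} with N_{F_{q^k}/F_q}(a) = 1, let σ_a = {(s, a s, s^{q^2}, …, s^{q^{r-1}}) : s ∈ F_{q^k}}. Then U ∩ σ_a is an F_q-subspace of F_{q^k}^r of F_q-dimension exactly 1. -/
/-!
A vector of `U` lies in `σ_a` iff its first coordinate `s` satisfies `s ^ q = a * s`, so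
`U ∩ σ_a` is the image of the `F`-subspace `{s | s ^ q = a * s}` under the injective `F`-linear
map `s ↦ (s ^ q ^ i)ᵢ`. The nonzero elements of that subspace are the solutions of
`s ^ (q - 1) = a`. Since `N(a) = a ^ ((q ^ k - 1) / (q - 1)) = 1` and `Kˣ` is cyclic, `a` is a
`(q - 1)`-th power (Hilbert 90), and two solutions differ by a factor fixed by the Frobenius,
that is, by an element of `F`.
-/

open Module

/-- The `q`-system `U = {(s, s^q, s^{q^2}, …, s^{q^{r-1}}) : s ∈ K}` (as a set). -/
def uSet (F K : Type*) [Field F] [Fintype F] [Field K] (r : ℕ) : Set (Fin r → K) :=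
  Set.range fun s : K => fun i : Fin r => s ^ Fintype.card F ^ (i : ℕ)

/-- The set `σ_a = {(s, a s, s^{q^2}, …, s^{q^{r-1}}) : s ∈ K}`. -/
def sigmaSet (F K : Type*) [Field F] [Fintype F] [Field K] (r : ℕ) (a : K) :
    Set (Fin r → K) :=
  Set.range fun s : K => fun i : Fin r =>
    if (i : ℕ) = 1 then a * s else s ^ Fintype.card F ^ (i : ℕ)

theorem IsCyclic.exists_pow_eq_of_pow_card_div_eq_one {G : Type*} [CommGroup G] [IsCyclic G]
    [Finite G] {d : ℕ} (hd : d ∣ Nat.card G) {x : G} (hx : x ^ (Nat.card G / d) = 1) :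
    ∃ y : G, y ^ d = x := by
  set n := Nat.card G
  have hrange : (powMonoidHom d : G →* G).range = (powMonoidHom (n / d) : G →* G).ker := by
    refine Subgroup.eq_of_le_of_card_ge ?_ ?_
    · rintro _ ⟨y, rfl⟩
      simp only [MonoidHom.mem_ker, powMonoidHom_apply, ← pow_mul, Nat.mul_div_cancel' hd]
      exact pow_card_eq_one'
    · rw [IsCyclic.card_powMonoidHom_range, IsCyclic.card_powMonoidHom_ker,
        Nat.gcd_eq_right hd, Nat.gcd_eq_right (Nat.div_dvd_of_dvd hd)]
  obtain ⟨y, hy⟩ : x ∈ (powMonoidHom d : G →* G).range := hrange ▸ hx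
  exact ⟨y, hy⟩

namespace FiniteField

variable {F K : Type*} [Field F] [Fintype F] [Field K] [Algebra F K] [Finite K]

theorem exists_pow_card_sub_one_eq_of_norm_eq_one {a : K} (ha : Algebra.norm F a = 1) :
    ∃ s : K, s ≠ 0 ∧ s ^ (Fintype.card F - 1) = a := by
  have : Fintype K := Fintype.ofFinite K
  have ha0 : a ≠ 0 := by rintro rfl; simp at ha
  have hdvd : Fintype.card F - 1 ∣ Nat.card Kˣ := by
    rw [Nat.card_units, Nat.card_eq_fintype_card, Module.card_eq_pow_finrank (K := F) (V := K)]
    exact Nat.sub_one_dvd_pow_sub_one _ _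
  have hnorm : Units.mk0 a ha0 ^ (Nat.card Kˣ / (Fintype.card F - 1)) = 1 := by
    ext
    rw [Units.val_pow_eq_pow_val, Units.val_mk0, Units.val_one, Nat.card_units,
      ← Nat.card_eq_fintype_card (α := F), ← algebraMap_norm_eq_pow, ha, map_one]
  obtain ⟨s, hs⟩ := IsCyclic.exists_pow_eq_of_pow_card_div_eq_one hdvd hnorm
  exact ⟨s, s.ne_zero, by simpa using congrArg Units.val hs⟩

theorem mem_range_algebraMap_of_pow_card_eq_self {x : K} (hx : x ^ Fintype.card F = x) :
    x ∈ Set.range (algebraMap F K) := by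
  refine (IsGalois.mem_range_algebraMap_iff_fixed x).mpr fun f => ?_
  obtain ⟨n, rfl⟩ := (bijective_frobeniusAlgEquivOfAlgebraic_pow F K).2 f
  rw [AlgEquiv.coe_pow, coe_frobeniusAlgEquivOfAlgebraic]
  exact Function.iterate_fixed hx _

end FiniteField

open FiniteField

section
variable (F : Type*) {K : Type*} [Field F] [Fintype F] [Field K] [Algebra F K]

def frobeniusEqMulSubspace (a : K) : Submodule F K :=
  LinearMap.ker ((frobeniusAlgHom F K).toLinearMap - LinearMap.mulLeft F a)

variable {F}

theorem mem_frobeniusEqMulSubspace {a s : K} :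
    s ∈ frobeniusEqMulSubspace F a ↔ s ^ Fintype.card F = a * s := by
  simp [frobeniusEqMulSubspace, sub_eq_zero]

theorem frobeniusEqMulSubspace_eq_span [Finite K] {a s₀ : K} (hs₀ : s₀ ≠ 0)
    (hs₀a : s₀ ^ Fintype.card F = a * s₀) :
    frobeniusEqMulSubspace F a = Submodule.span F {s₀} := by
  have ha : a ≠ 0 := by rintro rfl; exact pow_ne_zero _ hs₀ (by rwa [zero_mul] at hs₀a)
  ext s
  rw [mem_frobeniusEqMulSubspace, Submodule.mem_span_singleton]
  constructor
  · intro hs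
    obtain ⟨c, hc⟩ := mem_range_algebraMap_of_pow_card_eq_self (F := F) (x := s / s₀) (by
      rw [div_pow, hs, hs₀a, mul_div_mul_left _ _ ha])
    exact ⟨c, by rw [Algebra.smul_def, hc, div_mul_cancel₀ _ hs₀]⟩
  · rintro ⟨c, rfl⟩
    rw [Algebra.smul_def, mul_pow, ← map_pow, FiniteField.pow_card, hs₀a, mul_left_comm]

theorem finrank_frobeniusEqMulSubspace_of_norm_eq_one [Finite K] {a : K}
    (ha : Algebra.norm F a = 1) : finrank F (frobeniusEqMulSubspace F a) = 1 := by
  obtain ⟨s₀, hs₀, hs₀a⟩ := exists_pow_card_sub_one_eq_of_norm_eq_one ha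
  have : s₀ ^ Fintype.card F = a * s₀ := by
    rw [← hs₀a, ← pow_succ, Nat.sub_one_add_one Fintype.card_ne_zero]
  rw [frobeniusEqMulSubspace_eq_span hs₀ this, finrank_span_singleton hs₀]

variable (F K) in
def qSystemMap (r : ℕ) : K →ₗ[F] Fin r → K :=
  LinearMap.pi fun i => ((frobeniusAlgHom F K) ^ (i : ℕ)).toLinearMap

theorem qSystemMap_apply (r : ℕ) (s : K) (i : Fin r) :
    qSystemMap F K r s i = s ^ Fintype.card F ^ (i : ℕ) := by
  simp [qSystemMap, AlgHom.coe_pow, coe_frobeniusAlgHom, pow_iterate]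

theorem qSystemMap_injective {r : ℕ} (hr : r ≠ 0) : Function.Injective (qSystemMap F K r) := by
  intro s t h
  simpa [qSystemMap_apply] using congrFun h ⟨0, Nat.pos_of_ne_zero hr⟩

theorem uSet_inter_sigmaSet {r : ℕ} (hr : 2 ≤ r) (a : K) :
    uSet F K r ∩ sigmaSet F K r a = qSystemMap F K r '' frobeniusEqMulSubspace F a := by
  ext x
  constructor
  · rintro ⟨⟨s, rfl⟩, ⟨t, ht⟩⟩
    have h0 := congrFun ht ⟨0, by omega⟩
    have h1 := congrFun ht ⟨1, hr⟩
    simp only [pow_zero, pow_one, if_true, zero_ne_one, if_false] at h0 h1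
    subst h0
    refine ⟨t, mem_frobeniusEqMulSubspace.mpr h1.symm, funext fun i => qSystemMap_apply r t i⟩
  · rintro ⟨s, hs, rfl⟩
    refine ⟨⟨s, funext fun i => (qSystemMap_apply r s i).symm⟩, s, funext fun i => ?_⟩
    dsimp only
    rw [qSystemMap_apply]
    split_ifs with hi
    · rw [hi, pow_one, mem_frobeniusEqMulSubspace.mp hs]
    · rfl

end

theorem stmt4_general (F K : Type*) [Field F] [Fintype F] [Field K] [Algebra F K]
    [FiniteDimensional F K] (r : ℕ) (hr : 2 ≤ r) (a : K) (ha : Algebra.norm F a = 1) :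
    ∃ V : Submodule F (Fin r → K),
      (V : Set (Fin r → K)) = uSet F K r ∩ sigmaSet F K r a ∧ finrank F V = 1 := by
  have : Finite K := Module.finite_of_finite F
  refine ⟨(frobeniusEqMulSubspace F a).map (qSystemMap F K r), ?_, ?_⟩
  · rw [Submodule.map_coe, uSet_inter_sigmaSet hr]
  · rw [← (Submodule.equivMapOfInjective _ (qSystemMap_injective (by omega)) _).finrank_eq]
    exact finrank_frobeniusEqMulSubspace_of_norm_eq_one ha

theorem stmt4 (F K : Type*) [Field F] [Fintype F] [Field K] [Algebra F K]
    [FiniteDimensional F K] (k r : ℕ) (hk : 2 ≤ k) (hr : 2 ≤ r)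
    (hfr : finrank F K = k) (a : K) (ha : Algebra.norm F a = 1) :
    ∃ V : Submodule F (Fin r → K),
      (V : Set (Fin r → K)) = uSet F K r ∩ sigmaSet F K r a ∧ finrank F V = 1 :=
  stmt4_general F K r hr a ha
end

section
/- Let q be a prime power, k,r ≥ 2 with rk even, and suppose there exists an F_q-subspace U of F_{q^k}^r of dimension rk/2 whose linear set L_U is scattered (all points have weight 1). Then the maximum size of an intersecting set with respect to a (rk/2)-dimensional subspace of F_q^{rk} equals (q^{rk/2} - 1)/(q - 1). -/
open Module

lemma aux_card (F V : Type*) [Field F] [Fintype F] [AddCommGroup V] [Module F V] [Fintype V]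
    [DecidableEq V] (W : Submodule F V) [Fintype ↥((W : Set V))]
    [Fintype ↥((W : Set V) \ {0})] :
    (Set.toFinset ((W : Set V) \ {0})).card = Fintype.card F ^ finrank F W - 1 := by
  classical
  rw [Set.toFinset_diff, Finset.card_sdiff_of_subset (by simp [Set.subset_toFinset]),
    Set.toFinset_card]
  simp only [Set.toFinset_singleton, Finset.card_singleton]
  congr 1
  have : Fintype.card ↥(W : Set V) = Fintype.card W := Fintype.card_congr (Equiv.refl _)
  rw [this]
  exact card_eq_pow_finrank

lemma aux_span_eq {K V : Type*} [Field K] [AddCommGroup V] [Module K V] {v x : V}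
    (hx : x ≠ 0) (h : x ∈ Submodule.span K {v}) :
    Submodule.span K {x} = Submodule.span K {v} := by
  obtain ⟨c, rfl⟩ := Submodule.mem_span_singleton.mp h
  have hc : c ≠ 0 := by rintro rfl; simp at hx
  exact Submodule.span_singleton_smul_eq (IsUnit.mk0 c hc) v

theorem stmt9 (F K : Type*) [Field F] [Fintype F] [Field K] [Algebra F K]
    [FiniteDimensional F K] (k r : ℕ) (hk : 2 ≤ k) (hr : 2 ≤ r)
    (hfr : finrank F K = k) (heven : 2 ∣ r * k)
    (hscattered : ∃ U : Submodule F (Fin r → K), finrank F U = r * k / 2 ∧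
      ∀ v : Fin r → K, v ≠ 0 → v ∈ U →
        finrank F (U ⊓ (Submodule.span K {v}).restrictScalars F :
          Submodule F (Fin r → K)) = 1) :
    IsGreatest
      {m : ℕ | ∃ (U' : Submodule F (Fin (r * k) → F))
          (S : Finset (Submodule F (Fin (r * k) → F))),
        finrank F U' = r * k / 2 ∧
        (∀ W ∈ S, finrank F W = k ∧ W ⊓ U' ≠ ⊥) ∧
        (∀ W ∈ S, ∀ W' ∈ S, W ≠ W' → W ⊓ W' = ⊥) ∧
        S.card = m}
      ((Fintype.card F ^ (r * k / 2) - 1) / (Fintype.card F - 1)) := by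
  classical
  obtain ⟨U, hU, hsc⟩ := hscattered
  have hF2 : 1 < Fintype.card F := Fintype.one_lt_card
  set q := Fintype.card F with hqdef
  set h := r * k / 2 with hhdef
  have hq1 : 0 < q - 1 := by omega
  constructor
  · -- membership: the construction from the scattered subspace
    have hKfin : Finite K := Module.finite_of_finite F
    letI : Fintype K := Fintype.ofFinite K
    have hrank1 : finrank F (Fin r → K) = r * k := by
      simp [Module.finrank_pi_fintype, hfr, Finset.sum_const]
    have hrank2 : finrank F (Fin (r * k) → F) = r * k := by simp
    obtain ⟨e⟩ := FiniteDimensional.nonempty_linearEquiv_of_finrank_eq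
      (hrank1.trans hrank2.symm)
    set L : (Fin r → K) → Submodule F (Fin r → K) :=
      fun v => (Submodule.span K {v}).restrictScalars F with hLdef
    set D : Finset (Fin r → K) := Set.toFinset ((U : Set (Fin r → K)) \ {0}) with hDdef
    have hDmem : ∀ v, v ∈ D ↔ v ∈ U ∧ v ≠ 0 := by
      intro v; simp [hDdef, Set.mem_diff]
    set T : Finset (Submodule F (Fin r → K)) := D.image L with hTdef
    -- basic facts about L
    have hmemL : ∀ v : Fin r → K, v ∈ L v := fun v =>
      Submodule.mem_span_singleton_self v
    have hLeq : ∀ v w : Fin r → K, v ≠ 0 → v ∈ L w → L v = L w := by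
      intro v w hv hvw
      simp only [hLdef]
      rw [aux_span_eq hv hvw]
    have hLbot : ∀ v w : Fin r → K, v ≠ 0 → w ≠ 0 → L v ≠ L w → L v ⊓ L w = ⊥ := by
      intro v w hv hw hne
      rw [Submodule.eq_bot_iff]
      intro x hx
      by_contra hx0
      rw [Submodule.mem_inf] at hx
      exact hne ((hLeq x v hx0 hx.1).symm.trans (hLeq x w hx0 hx.2))
    have hLrank : ∀ v : Fin r → K, v ≠ 0 → finrank F (L v) = k := by
      intro v hv
      have h1 : finrank K (Submodule.span K {v}) = 1 := finrank_span_singleton hv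
      have h2 : finrank K (L v) = 1 := by
        rw [(Submodule.restrictScalarsEquiv F K _ (Submodule.span K {v})).finrank_eq]
        exact h1
      have h3 : finrank F K * finrank K (L v) = finrank F (L v) :=
        finrank_mul_finrank F K (L v)
      rw [← h3, h2, hfr, mul_one]
    -- the transferred objects
    have hinj : Function.Injective
        (Submodule.map (e : (Fin r → K) →ₗ[F] (Fin (r * k) → F))) :=
      Submodule.map_injective_of_injective e.injective
    refine ⟨U.map (e : (Fin r → K) →ₗ[F] (Fin (r * k) → F)),
      T.image (Submodule.map (e : (Fin r → K) →ₗ[F] (Fin (r * k) → F))), ?_, ?_, ?_, ?_⟩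
    · rw [LinearEquiv.finrank_map_eq, hU]
    · intro W hW
      obtain ⟨P, hP, rfl⟩ := Finset.mem_image.mp hW
      obtain ⟨v, hvD, rfl⟩ := Finset.mem_image.mp hP
      obtain ⟨hvU, hv0⟩ := (hDmem v).mp hvD
      constructor
      · rw [LinearEquiv.finrank_map_eq]
        exact hLrank v hv0
      · rw [← Submodule.map_inf (e : (Fin r → K) →ₗ[F] (Fin (r * k) → F)) e.injective]
        intro hbot
        have : (L v ⊓ U : Submodule F (Fin r → K)) = ⊥ :=
          hinj (by rw [hbot, Submodule.map_bot])
        have hv : v ∈ (L v ⊓ U : Submodule F (Fin r → K)) :=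
          Submodule.mem_inf.mpr ⟨hmemL v, hvU⟩
        rw [this, Submodule.mem_bot] at hv
        exact hv0 hv
    · intro W hW W' hW' hne
      obtain ⟨P, hP, rfl⟩ := Finset.mem_image.mp hW
      obtain ⟨v, hvD, rfl⟩ := Finset.mem_image.mp hP
      obtain ⟨P', hP', rfl⟩ := Finset.mem_image.mp hW'
      obtain ⟨w, hwD, rfl⟩ := Finset.mem_image.mp hP'
      obtain ⟨hvU, hv0⟩ := (hDmem v).mp hvD
      obtain ⟨hwU, hw0⟩ := (hDmem w).mp hwD
      have hLne : L v ≠ L w := fun hh => hne (by rw [hh])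
      rw [← Submodule.map_inf (e : (Fin r → K) →ₗ[F] (Fin (r * k) → F)) e.injective,
        hLbot v w hv0 hw0 hLne, Submodule.map_bot]
    · rw [Finset.card_image_of_injective _ hinj]
      -- count the fibers of L on D
      have hfib : ∀ b ∈ T, (D.filter (fun v => L v = b)).card = q - 1 := by
        intro b hb
        obtain ⟨v0, hv0D, rfl⟩ := Finset.mem_image.mp hb
        obtain ⟨hv0U, hv00⟩ := (hDmem v0).mp hv0D
        have hfeq : D.filter (fun v => L v = L v0) =
            Set.toFinset (((U ⊓ L v0 : Submodule F (Fin r → K)) : Set (Fin r → K)) \ {0}) := by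
          ext x
          simp only [Finset.mem_filter, Set.mem_toFinset, Set.mem_diff, SetLike.mem_coe,
            Submodule.mem_inf, Set.mem_singleton_iff, hDmem]
          constructor
          · rintro ⟨⟨hxU, hx0⟩, hLx⟩
            exact ⟨⟨hxU, hLx ▸ hmemL x⟩, hx0⟩
          · rintro ⟨⟨hxU, hxs⟩, hx0⟩
            exact ⟨⟨hxU, hx0⟩, hLeq x v0 hx0 hxs⟩
        rw [hfeq, aux_card, hsc v0 hv00 hv0U, pow_one]
      have hDcard : D.card = q ^ h - 1 := by
        rw [hDdef, aux_card, hU]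
      have hkey : D.card = T.card * (q - 1) := by
        rw [Finset.card_eq_sum_card_fiberwise
          (f := L) (t := T) (fun x hx => Finset.mem_image_of_mem L hx),
          Finset.sum_congr rfl hfib, Finset.sum_const, smul_eq_mul]
      rw [hDcard] at hkey
      rw [hkey]
      exact (Nat.mul_div_cancel _ hq1).symm
  · -- upper bound
    rintro m ⟨U', S, hU', hWk, hdisj, rfl⟩
    rw [Nat.le_div_iff_mul_le hq1]
    set A : Submodule F (Fin (r * k) → F) → Finset (Fin (r * k) → F) :=
      fun W => Set.toFinset (((W ⊓ U' : Submodule F (Fin (r * k) → F)) :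
        Set (Fin (r * k) → F)) \ {0}) with hA
    have hAsub : ∀ W ∈ S, A W ⊆ Set.toFinset ((U' : Set (Fin (r * k) → F)) \ {0}) := by
      intro W _ x hx
      simp only [hA, Set.mem_toFinset, Set.mem_diff, SetLike.mem_coe,
        Submodule.mem_inf] at hx ⊢
      exact ⟨hx.1.2, hx.2⟩
    have hdisjA : ∀ W ∈ S, ∀ W' ∈ S, W ≠ W' → Disjoint (A W) (A W') := by
      intro W hW W' hW' hne
      refine Finset.disjoint_left.mpr fun x hx hx' => ?_
      simp only [hA, Set.mem_toFinset, Set.mem_diff, SetLike.mem_coe,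
        Submodule.mem_inf, Set.mem_singleton_iff] at hx hx'
      have hmem : x ∈ (W ⊓ W' : Submodule F (Fin (r * k) → F)) :=
        Submodule.mem_inf.mpr ⟨hx.1.1, hx'.1.1⟩
      rw [hdisj W hW W' hW' hne, Submodule.mem_bot] at hmem
      exact hx.2 hmem
    have hlow : ∀ W ∈ S, q - 1 ≤ (A W).card := by
      intro W hW
      have hne := (hWk W hW).2
      have hrk : 1 ≤ finrank F (W ⊓ U' : Submodule F (Fin (r * k) → F)) := by
        rw [Nat.one_le_iff_ne_zero]
        exact fun h0 => hne (Submodule.finrank_eq_zero.mp h0)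
      have hcard : (A W).card =
          q ^ finrank F (W ⊓ U' : Submodule F (Fin (r * k) → F)) - 1 := aux_card F _ _
      rw [hcard]
      have : q ^ 1 ≤ q ^ finrank F (W ⊓ U' : Submodule F (Fin (r * k) → F)) :=
        Nat.pow_le_pow_right (by omega) hrk
      rw [pow_one] at this
      omega
    have hcardU' : (Set.toFinset ((U' : Set (Fin (r * k) → F)) \ {0})).card = q ^ h - 1 := by
      rw [aux_card, hU']
    calc S.card * (q - 1) = ∑ _W ∈ S, (q - 1) := by
          rw [Finset.sum_const, smul_eq_mul]
      _ ≤ ∑ W ∈ S, (A W).card := Finset.sum_le_sum hlow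
      _ = (S.biUnion A).card := (Finset.card_biUnion hdisjA).symm
      _ ≤ (Set.toFinset ((U' : Set (Fin (r * k) → F)) \ {0})).card :=
          Finset.card_le_card (Finset.biUnion_subset.mpr hAsub)
      _ ≤ q ^ h - 1 := hcardU'.le
end

section
/- Let q be a prime power and k ≤ n. For k-dimensional subspaces U_A = rowspace(Id_k | A) and U_B = rowspace(Id_k | B) of F_q^n, where A, B are k×(n−k) matrices over F_q, the subspace distance satisfies d_S(U_A, U_B) = 2·rank(A − B). -/
open Module

/-- The row space of the `k × (k+m)` matrix `(Id_k | A)`. -/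
def rowSpaceIdAug (F : Type*) [Field F] (k m : ℕ) (A : Matrix (Fin k) (Fin m) F) :
    Submodule F (Fin (k + m) → F) :=
  Submodule.span F (Set.range fun i : Fin k => Fin.append (Pi.single i (1 : F)) (A i))

section aux
variable (F : Type*) [Field F] (k m : ℕ)

/-- Embedding of `F^m` into the last `m` coordinates of `F^(k+m)`. -/
def appendRightLM : (Fin m → F) →ₗ[F] (Fin (k + m) → F) where
  toFun x := Fin.append 0 x
  map_add' x y := by
    ext j
    refine Fin.addCases (fun i => ?_) (fun i => ?_) j <;>
      simp [Fin.append_left, Fin.append_right]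
  map_smul' c x := by
    ext j
    refine Fin.addCases (fun i => ?_) (fun i => ?_) j <;>
      simp [Fin.append_left, Fin.append_right]

lemma appendRightLM_inj : Function.Injective (appendRightLM F k m) := by
  intro x y h
  ext i
  have := congrFun h (Fin.natAdd k i)
  simpa [appendRightLM, Fin.append_right] using this

variable {F k m}

lemma li_rows (A : Matrix (Fin k) (Fin m) F) :
    LinearIndependent F (fun i : Fin k => Fin.append (Pi.single i (1 : F)) (A i)) := by
  rw [Fintype.linearIndependent_iff]
  intro c hc i
  have := congrFun hc (Fin.castAdd m i)
  simpa [Finset.sum_apply, Fin.append_left, Pi.single_apply, Finset.sum_ite_eq'] using this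

lemma finrank_rowSpaceIdAug (A : Matrix (Fin k) (Fin m) F) :
    finrank F (rowSpaceIdAug F k m A) = k := by
  rw [rowSpaceIdAug, finrank_span_eq_card (li_rows A)]
  simp

lemma eq_zero_of_mem (A : Matrix (Fin k) (Fin m) F) (x : Fin (k + m) → F)
    (hx : x ∈ rowSpaceIdAug F k m A) (h0 : ∀ i, x (Fin.castAdd m i) = 0) : x = 0 := by
  rw [rowSpaceIdAug, Submodule.mem_span_range_iff_exists_fun] at hx
  obtain ⟨c, rfl⟩ := hx
  have hc : ∀ i, c i = 0 := by
    intro i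
    have := h0 i
    simpa [Finset.sum_apply, Fin.append_left, Pi.single_apply, Finset.sum_ite_eq'] using this
  simp [hc]

end aux

theorem stmt13 (F : Type*) [Field F] [Fintype F] (k m : ℕ)
    (A B : Matrix (Fin k) (Fin m) F) :
    finrank F (rowSpaceIdAug F k m A ⊔ rowSpaceIdAug F k m B :
        Submodule F (Fin (k + m) → F)) -
      finrank F (rowSpaceIdAug F k m A ⊓ rowSpaceIdAug F k m B :
        Submodule F (Fin (k + m) → F)) = 2 * (A - B).rank := by
  classical
  set f := appendRightLM F k m with hf
  set Z : Submodule F (Fin (k + m) → F) :=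
    (Submodule.span F (Set.range (A - B))).map f with hZ
  -- finrank Z = rank (A - B)
  have hrZ : finrank F Z = (A - B).rank := by
    rw [(A - B).rank_eq_finrank_span_row]
    exact (LinearEquiv.finrank_eq
      (Submodule.equivMapOfInjective f (appendRightLM_inj F k m) _)).symm
  -- elements of Z vanish on first coordinates
  have hZ0 : ∀ x ∈ Z, ∀ i, x (Fin.castAdd m i) = 0 := by
    rintro x ⟨y, _, rfl⟩ i
    simp [hf, appendRightLM, Fin.append_left]
  -- generators of Z
  have hzmem : ∀ i : Fin k, f ((A - B) i) ∈ Z := fun i =>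
    Submodule.mem_map_of_mem (Submodule.subset_span ⟨i, rfl⟩)
  -- key identity between generators
  have hkey : ∀ i : Fin k,
      Fin.append (Pi.single i (1 : F)) (B i) =
        Fin.append (Pi.single i (1 : F)) (A i) - f ((A - B) i) := by
    intro i
    ext j
    refine Fin.addCases (fun j => ?_) (fun j => ?_) j <;>
      simp [hf, appendRightLM, Fin.append_left, Fin.append_right]
  -- sup equality
  have hsup : rowSpaceIdAug F k m A ⊔ rowSpaceIdAug F k m B =
      rowSpaceIdAug F k m A ⊔ Z := by
    apply le_antisymm
    · refine sup_le le_sup_left ?_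
      rw [rowSpaceIdAug, Submodule.span_le]
      rintro _ ⟨i, rfl⟩
      show Fin.append (Pi.single i (1 : F)) (B i) ∈ _
      rw [hkey i]
      exact sub_mem (Submodule.mem_sup_left
        (Submodule.subset_span ⟨i, rfl⟩)) (Submodule.mem_sup_right (hzmem i))
    · refine sup_le le_sup_left ?_
      rw [hZ, Submodule.map_le_iff_le_comap, Submodule.span_le]
      rintro _ ⟨i, rfl⟩
      show (A - B) i ∈ _
      have : f ((A - B) i) =
          Fin.append (Pi.single i (1 : F)) (A i) -
            Fin.append (Pi.single i (1 : F)) (B i) := by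
        rw [hkey i]; ring
      simp only [SetLike.mem_coe, Submodule.mem_comap, this]
      exact sub_mem (Submodule.mem_sup_left (Submodule.subset_span ⟨i, rfl⟩))
        (Submodule.mem_sup_right (Submodule.subset_span ⟨i, rfl⟩))
  -- U_A ⊓ Z = ⊥
  have hdisj : rowSpaceIdAug F k m A ⊓ Z = ⊥ := by
    rw [Submodule.eq_bot_iff]
    rintro x ⟨hxA, hxZ⟩
    exact eq_zero_of_mem A x hxA (hZ0 x hxZ)
  have hA : finrank F (rowSpaceIdAug F k m A) = k := finrank_rowSpaceIdAug A
  have hB : finrank F (rowSpaceIdAug F k m B) = k := finrank_rowSpaceIdAug B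
  have h1 := Submodule.finrank_sup_add_finrank_inf_eq (rowSpaceIdAug F k m A) Z
  have h2 := Submodule.finrank_sup_add_finrank_inf_eq
    (rowSpaceIdAug F k m A) (rowSpaceIdAug F k m B)
  rw [hdisj, finrank_bot, hA, hrZ] at h1
  rw [hsup, hA, hB] at h2
  have hle : (A - B).rank ≤ k := by
    simpa using (A - B).rank_le_card_height
  rw [hsup]
  omega
end

section
/- Let q be a prime power, r,k ≥ 2. Define the F_q-linear map ψ: F_{q^k}^r → F_{q^k}^r by ψ(x_1,…,x_r) = (x_1, x_2, x_3^{q^{k−2}}, x_4^{q^{k−3}}, …, x_r^{q^{k−r+1}}). Then ψ is an F_q-linear bijection, ψ maps U = {(s, s^q, …, s^{q^{r−1}}) : s ∈ F_{q^k}} onto U' = {(x, x^q, x, …, x) : x ∈ F_{q^k}}, and for every a ∈ F_{q^k} with norm 1, ψ maps σ_a = {(s, as, s^{q^2}, …, s^{q^{r−1}}) : s ∈ F_{q^k}} onto the F_{q^k}-line spanned by (1, a, 1, …, 1). -/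
open Module

theorem stmt16 (F K : Type*) [Field F] [Fintype F] [Field K] [Algebra F K]
    [FiniteDimensional F K] (k r : ℕ) (hk : 2 ≤ k) (hr : 2 ≤ r)
    (hfr : finrank F K = k) :
    ∃ ψ : (Fin r → K) →ₗ[F] (Fin r → K),
      -- ψ(x₁, x₂, x₃, …, x_r) = (x₁, x₂, x₃^{q^{k-2}}, …, x_r^{q^{k-r+1}}),
      -- exponents of the Frobenius taken modulo k since y^{q^k} = y on K
      (∀ (x : Fin r → K) (i : Fin r), ψ x i =
        if (i : ℕ) ≤ 1 then x i
        else (x i) ^ Fintype.card F ^ ((k - (i : ℕ) % k) % k)) ∧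
      Function.Bijective ψ ∧
      -- ψ maps U = {(s, s^q, …, s^{q^{r-1}})} onto U' = {(x, x^q, x, …, x)}
      (⇑ψ '' Set.range (fun s : K => fun i : Fin r => s ^ Fintype.card F ^ (i : ℕ)) =
        Set.range (fun x : K => fun i : Fin r =>
          if (i : ℕ) = 1 then x ^ Fintype.card F else x)) ∧
      -- ψ maps each σ_a onto the K-line spanned by (1, a, 1, …, 1)
      (∀ a : K, Algebra.norm F a = 1 →
        ⇑ψ '' Set.range (fun s : K => fun i : Fin r =>
            if (i : ℕ) = 1 then a * s else s ^ Fintype.card F ^ (i : ℕ)) =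
          ↑(Submodule.span K {fun i : Fin r => if (i : ℕ) = 1 then a else 1})) := by
  classical
  set q := Fintype.card F with hq
  obtain ⟨p, hp⟩ := CharP.exists F
  haveI := hp
  haveI : Fact p.Prime := ⟨CharP.char_is_prime F p⟩
  haveI : CharP K p := charP_of_injective_algebraMap (algebraMap F K).injective p
  obtain ⟨n, -, hn⟩ := FiniteField.card F p
  haveI : Fintype K := Module.fintypeOfFintype (Module.finBasis F K)
  have hqm : ∀ m : ℕ, q ^ m = p ^ (n * m) := fun m => by rw [hq, hn, ← pow_mul]
  have hadd : ∀ (m : ℕ) (x y : K), (x + y) ^ q ^ m = x ^ q ^ m + y ^ q ^ m := by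
    intro m x y; rw [hqm]; exact add_pow_char_pow x y p (↑n * m)
  have hFfix : ∀ (m : ℕ) (c : F), c ^ q ^ m = c := fun m c =>
    FiniteField.pow_card_pow m c
  have hsmul : ∀ (m : ℕ) (c : F) (x : K), (c • x) ^ q ^ m = c • x ^ q ^ m := by
    intro m c x
    rw [Algebra.smul_def, mul_pow, ← map_pow, hFfix, Algebra.smul_def]
  have hinj : ∀ m : ℕ, Function.Injective (fun x : K => x ^ q ^ m) := by
    intro m x y h
    have h' : x ^ q ^ m = y ^ q ^ m := h
    have h0 : (x - y) ^ q ^ m = 0 := by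
      rw [hqm, sub_pow_char_pow (p := p) (n := ↑n * m) x y, ← hqm, h', sub_self]
    have hne : q ^ m ≠ 0 := by
      have : 0 < q := Fintype.card_pos
      positivity
    exact sub_eq_zero.mp ((pow_eq_zero_iff hne).mp h0)
  have hcardK : Fintype.card K = q ^ k := by
    rw [Module.card_fintype (Module.finBasis F K), Fintype.card_fin, hfr]
  have hmain : ∀ (s : K) (j : ℕ), (s ^ q ^ j) ^ q ^ ((k - j % k) % k) = s := by
    intro s j
    obtain ⟨t, ht⟩ : k ∣ j + (k - j % k) % k := by
      rcases Nat.eq_zero_or_pos (j % k) with h | h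
      · simpa [h] using Nat.dvd_of_mod_eq_zero h
      · have h1 : j % k < k := Nat.mod_lt _ (by omega)
        rw [Nat.mod_eq_of_lt (by omega)]
        refine ⟨j / k + 1, ?_⟩
        have h2 := Nat.div_add_mod j k
        rw [Nat.mul_succ]
        omega
    rw [← pow_mul, ← pow_add, ht, pow_mul, ← hcardK]
    exact FiniteField.pow_card_pow t s
  let ψ : (Fin r → K) →ₗ[F] (Fin r → K) :=
    { toFun := fun x i => if (i : ℕ) ≤ 1 then x i
        else (x i) ^ q ^ ((k - (i : ℕ) % k) % k)
      map_add' := by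
        intro x y; funext i
        by_cases h : (i : ℕ) ≤ 1 <;> simp [h, hadd]
      map_smul' := by
        intro c x; funext i
        by_cases h : (i : ℕ) ≤ 1 <;> simp [h, hsmul] }
  have hψ : ∀ (x : Fin r → K) (i : Fin r), ψ x i =
      if (i : ℕ) ≤ 1 then x i else (x i) ^ q ^ ((k - (i : ℕ) % k) % k) :=
    fun x i => rfl
  refine ⟨ψ, hψ, ?_, ?_, ?_⟩
  · have hinjψ : Function.Injective ⇑ψ := by
      intro x y h
      funext i
      have hi : ψ x i = ψ y i := congrFun h i
      rw [hψ, hψ] at hi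
      by_cases hle : (i : ℕ) ≤ 1
      · simpa [hle] using hi
      · simp only [hle, if_false] at hi
        exact hinj _ hi
    exact ⟨hinjψ, Finite.surjective_of_injective hinjψ⟩
  · rw [← Set.range_comp]
    apply congrArg Set.range
    funext s
    funext i
    simp only [Function.comp_apply]
    rw [hψ]
    by_cases hle : (i : ℕ) ≤ 1
    · interval_cases h : (i : ℕ) <;> simp_all
    · have h1 : (i : ℕ) ≠ 1 := by omega
      simp [hle, h1, hmain s (i : ℕ)]
  · intro a _
    rw [← Set.range_comp]
    have hco : (⇑ψ ∘ fun s : K => fun i : Fin r =>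
          if (i : ℕ) = 1 then a * s else s ^ q ^ (i : ℕ))
        = fun s : K => s • (fun i : Fin r => if (i : ℕ) = 1 then a else 1) := by
      funext s
      funext i
      simp only [Function.comp_apply, Pi.smul_apply, smul_eq_mul]
      rw [hψ]
      by_cases hle : (i : ℕ) ≤ 1
      · interval_cases h : (i : ℕ) <;> simp_all [mul_comm]
      · have h1 : (i : ℕ) ≠ 1 := by omega
        simp [hle, h1, hmain s (i : ℕ)]
    rw [hco]
    ext y
    simp [Set.mem_range, Submodule.mem_span_singleton]
end

section
/- Let q be a prime power and n, m, δ positive integers with δ ≤ min{n,m}. Any rank-metric code C ⊆ Mat(n×m, F_q) with minimum rank distance at least δ satisfies |C| ≤ q^{max{m,n}·(min{m,n} − δ + 1)} (Singleton-like bound for rank-metric codes). -/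
/-!
If `S` is a set of rows whose complement has fewer than `δ` elements, then two codewords that
agree on the rows in `S` differ by a matrix of rank less than `δ`, so they are equal. Hence
restricting to the rows in `S` is injective on a code of minimum rank distance `δ`, and taking
`|S| = n - δ + 1` gives the bound; for `m < n` apply this to the transposed code.
-/

namespace Matrix

open scoped Finset

variable {ι κ F : Type*} [Fintype ι] [Fintype κ] [Field F]

def MinRankDistAtLeast (C : Finset (Matrix ι κ F)) (δ : ℕ) : Prop :=
  ∀ A ∈ C, ∀ B ∈ C, A ≠ B → δ ≤ (A - B).rank

namespace MinRankDistAtLeast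

variable {C : Finset (Matrix ι κ F)} {δ : ℕ}

theorem card_le_of_card_compl_lt [Fintype F] [DecidableEq ι] (hC : MinRankDistAtLeast C δ)
    (S : Finset ι) (hS : #Sᶜ < δ) : #C ≤ Fintype.card F ^ (Fintype.card κ * #S) := by
  classical
  let restrict : Matrix ι κ F → (S → κ → F) := fun A i => A i
  have hinj : Set.InjOn restrict C := by
    intro A hA B hB hAB
    by_contra hne
    have hsupp : Function.support (A - B).row ⊆ ↑Sᶜ := by
      intro i hi
      rw [Finset.coe_compl]
      intro hiS
      exact hi (sub_eq_zero.2 (congrFun hAB ⟨i, hiS⟩))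
    have hrank_le := rank_le_card_of_support_subset (A - B) Sᶜ hsupp
    have hrank_ge := hC A hA B hB hne
    omega
  calc #C ≤ Fintype.card (S → κ → F) :=
        Finset.card_le_card_of_injOn restrict (fun _ _ => Finset.mem_univ _) hinj
    _ = Fintype.card F ^ (Fintype.card κ * #S) := by
        simp only [Fintype.card_fun, Fintype.card_coe, ← pow_mul]

theorem card_le [Fintype F] (hC : MinRankDistAtLeast C δ) (hδ : 0 < δ)
    (hδι : δ ≤ Fintype.card ι) :
    #C ≤ Fintype.card F ^ (Fintype.card κ * (Fintype.card ι - δ + 1)) := by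
  classical
  obtain ⟨S, -, hS⟩ := Finset.exists_subset_card_eq
    (show Fintype.card ι - δ + 1 ≤ #(Finset.univ : Finset ι) by
      rw [Finset.card_univ]; omega)
  refine hS ▸ hC.card_le_of_card_compl_lt S ?_
  rw [Finset.card_compl, hS]
  omega

theorem image_transpose [DecidableEq F] (hC : MinRankDistAtLeast C δ) :
    MinRankDistAtLeast (C.image transpose) δ := by
  simp only [MinRankDistAtLeast, Finset.mem_image]
  rintro _ ⟨A, hA, rfl⟩ _ ⟨B, hB, rfl⟩ hne
  rw [← transpose_sub, rank_transpose]
  exact hC A hA B hB (ne_of_apply_ne _ hne)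

end MinRankDistAtLeast

end Matrix

theorem stmt17_general (F : Type*) [Field F] [Fintype F] (n m δ : ℕ)
    (hδ : 0 < δ) (hδmin : δ ≤ min n m)
    (C : Finset (Matrix (Fin n) (Fin m) F))
    (hdist : ∀ A ∈ C, ∀ B ∈ C, A ≠ B → δ ≤ (A - B).rank) :
    C.card ≤ Fintype.card F ^ (max m n * (min m n - δ + 1)) := by
  classical
  have hC : Matrix.MinRankDistAtLeast C δ := hdist
  rcases le_total n m with hnm | hmn
  · have := hC.card_le hδ (by rw [Fintype.card_fin]; omega)
    simpa [max_eq_left hnm, min_eq_right hnm] using this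
  · have := hC.image_transpose.card_le hδ (by rw [Fintype.card_fin]; omega)
    rw [Finset.card_image_of_injective C Matrix.transpose_injective] at this
    simpa [max_eq_right hmn, min_eq_left hmn] using this

theorem stmt17 (F : Type*) [Field F] [Fintype F] (n m δ : ℕ)
    (hn : 0 < n) (hm : 0 < m) (hδ : 0 < δ) (hδmin : δ ≤ min n m)
    (C : Finset (Matrix (Fin n) (Fin m) F))
    (hdist : ∀ A ∈ C, ∀ B ∈ C, A ≠ B → δ ≤ (A - B).rank) :
    C.card ≤ Fintype.card F ^ (max m n * (min m n - δ + 1)) :=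
  stmt17_general F n m δ hδ hδmin C hdist
end
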